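/- The total number of cyclic subgroups of C_{2^a} × C_{2^b} × C_{2^c} with a ≥ b ≥ c ≥ 1 is (7/3)(4^c − 1) + 3·2^c(2^b − 2^c) + (a − b)·2^(b+c) + 1. -/

import Mathlib

/-!
A cyclic subgroup of order `n` has exactly `φ n` generators. In
`G = C_{2^a} × C_{2^b} × C_{2^c}` the elements killed by `2^k` number
`N k = 2^(min k a + min k b + min k c)`, and those of order exactly `2^(k+1)` number
`N (k+1) - N k`; dividing by `φ (2^(k+1)) = 2^k`, there are `7·4^k`, `3·2^(k+c)` and `2^(b+c)`
cyclic subgroups of order `2^(k+1)` in the ranges `k < c`, `c ≤ k < b` and `b ≤ k < a`, and none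
beyond. Summing these geometric progressions and adding the trivial subgroup gives the formula.
-/

open Finset AddSubgroup

section CyclicSubgroups

variable {α : Type*} [AddGroup α] [Fintype α]

theorem IsAddCyclic.card_nsmul_eq_zero_of_dvd [DecidableEq α] [IsAddCyclic α] {d : ℕ}
    (hd : d ∣ Fintype.card α) : #{x : α | d • x = 0} = d := by
  have hd0 : d ≠ 0 := ne_zero_of_dvd_ne_zero Fintype.card_ne_zero hd
  rw [← sum_card_addOrderOf_eq_card_nsmul_eq_zero hd0]
  exact (sum_congr rfl fun e he =>
    IsAddCyclic.card_addOrderOf_eq_totient ((Nat.mem_divisors.1 he).1.trans hd)).trans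
    (Nat.sum_totient d)

theorem card_addOrderOf_eq_prime_pow_succ_add [DecidableEq α] {p : ℕ} [hp : Fact p.Prime]
    (k : ℕ) :
    #{x : α | addOrderOf x = p ^ (k + 1)} + #{x : α | p ^ k • x = 0} =
      #{x : α | p ^ (k + 1) • x = 0} := by
  have hsplit := card_filter_add_card_filter_not (s := ({x | p ^ (k + 1) • x = 0} : Finset α))
    (fun x => p ^ k • x = 0)
  rw [filter_filter, filter_filter] at hsplit
  rw [← hsplit, add_comm]
  congr 2 <;> ext x <;> simp only [mem_filter, mem_univ, true_and]
  · refine ⟨fun h => ⟨?_, h⟩, fun h => h.2⟩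
    rw [pow_succ, mul_nsmul, h, nsmul_zero]
  · refine ⟨fun h => ⟨h ▸ addOrderOf_nsmul_eq_zero x, fun h' => ?_⟩,
      fun h => addOrderOf_eq_prime_pow h.2 h.1⟩
    have := Nat.le_of_dvd (pow_pos hp.out.pos k) (h ▸ addOrderOf_dvd_of_nsmul_eq_zero h')
    exact (Nat.pow_lt_pow_right hp.out.one_lt k.lt_succ_self).not_ge this

variable [DecidableEq (AddSubgroup α)]

theorem card_zmultiples_eq_zmultiples (y : α) :
    #{x : α | zmultiples x = zmultiples y} = Nat.totient (addOrderOf y) := by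
  have hgen (x : α) :
      zmultiples x = zmultiples y ↔ x ∈ zmultiples y ∧ addOrderOf x = addOrderOf y := by
    refine ⟨fun h => ⟨h ▸ mem_zmultiples x, ?_⟩, fun ⟨hx, hxy⟩ => ?_⟩
    · rw [← Nat.card_zmultiples, h, Nat.card_zmultiples]
    · refine eq_of_le_of_card_ge (zmultiples_le.2 hx) ?_
      rw [Nat.card_zmultiples, Nat.card_zmultiples, hxy]
  calc #{x : α | zmultiples x = zmultiples y}
      = Fintype.card {x // x ∈ zmultiples y ∧ addOrderOf x = addOrderOf y} := by
        rw [Fintype.card_subtype]; exact congrArg card (filter_congr fun x _ => hgen x)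
    _ = Fintype.card {z : zmultiples y // addOrderOf z = addOrderOf y} := by
        rw [Fintype.card_congr (Equiv.subtypeSubtypeEquivSubtypeInter _ _).symm]
        simp only [addOrderOf_coe]
    _ = _ := by
        rw [Fintype.card_subtype]
        refine IsAddCyclic.card_addOrderOf_eq_totient ?_
        rw [← Nat.card_eq_fintype_card, Nat.card_zmultiples]

variable (α) in
def cyclicAddSubgroups : Finset (AddSubgroup α) := univ.image zmultiples

@[simp]
theorem mem_cyclicAddSubgroups {H : AddSubgroup α} :
    H ∈ cyclicAddSubgroups α ↔ ∃ x, zmultiples x = H := by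
  simp [cyclicAddSubgroups]

theorem card_filter_cyclicAddSubgroups_mul_totient (n : ℕ) :
    #{H ∈ cyclicAddSubgroups α | Nat.card (H : AddSubgroup α) = n} * Nat.totient n =
      #{x : α | addOrderOf x = n} := by
  have hmaps : ∀ x ∈ ({x | addOrderOf x = n} : Finset α),
      zmultiples x ∈ {H ∈ cyclicAddSubgroups α | Nat.card (H : AddSubgroup α) = n} := by
    intro x hx
    rw [mem_filter, Nat.card_zmultiples, mem_cyclicAddSubgroups]
    exact ⟨⟨x, rfl⟩, (mem_filter.1 hx).2⟩
  rw [card_eq_sum_card_fiberwise hmaps, ← smul_eq_mul, ← sum_const]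
  refine sum_congr rfl fun H hH => ?_
  obtain ⟨hcyc, rfl⟩ := mem_filter.1 hH
  obtain ⟨y, rfl⟩ := mem_cyclicAddSubgroups.1 hcyc
  rw [filter_filter, Nat.card_zmultiples, ← card_zmultiples_eq_zmultiples]
  congr 1
  refine filter_congr fun x _ => (and_iff_right_of_imp fun h => ?_).symm
  rw [← Nat.card_zmultiples, h, Nat.card_zmultiples]

theorem card_cyclicAddSubgroups_eq_sum {p n : ℕ} [hp : Fact p.Prime]
    (h : ∀ x : α, p ^ n • x = 0) :
    #(cyclicAddSubgroups α) =
      ∑ k ∈ range (n + 1),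
        #{H ∈ cyclicAddSubgroups α | Nat.card (H : AddSubgroup α) = p ^ k} := by
  have hcard : ∀ H ∈ cyclicAddSubgroups α, ∃ k < n + 1, Nat.card H = p ^ k := by
    intro H hH
    obtain ⟨x, rfl⟩ := mem_cyclicAddSubgroups.1 hH
    obtain ⟨k, hk, hx⟩ := (Nat.dvd_prime_pow hp.out).1 (addOrderOf_dvd_of_nsmul_eq_zero (h x))
    exact ⟨k, Nat.lt_succ_of_le hk, by rw [Nat.card_zmultiples, hx]⟩
  rw [card_eq_sum_card_fiberwise (f := fun H : AddSubgroup α => Nat.card H)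
    (t := (range (n + 1)).image (p ^ ·)) fun H hH => by
      obtain ⟨k, hk, hH⟩ := hcard H hH
      exact mem_image.2 ⟨k, mem_range.2 hk, hH.symm⟩,
    sum_image fun i _ j _ hij => Nat.pow_right_injective hp.out.two_le hij]

end CyclicSubgroups

theorem ZMod.nsmul_eq_zero_of_dvd {n m : ℕ} (h : n ∣ m) (x : ZMod n) : m • x = 0 := by
  rw [nsmul_eq_mul, (ZMod.natCast_eq_zero_iff m n).2 h, zero_mul]

theorem ZMod.card_pow_nsmul_eq_zero (p a k : ℕ) [NeZero p] :
    #{x : ZMod (p ^ a) | p ^ k • x = 0} = p ^ min k a := by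
  rcases le_total k a with hka | hak
  · rw [min_eq_left hka]
    exact IsAddCyclic.card_nsmul_eq_zero_of_dvd (by rw [ZMod.card]; exact pow_dvd_pow p hka)
  · have hall (x : ZMod (p ^ a)) : p ^ k • x = 0 := nsmul_eq_zero_of_dvd (pow_dvd_pow p hak) x
    rw [min_eq_right hak, filter_true_of_mem fun x _ => hall x, card_univ, ZMod.card]

theorem Prod.card_nsmul_eq_zero {β γ : Type*} [AddGroup β] [AddGroup γ] [Fintype β]
    [Fintype γ] [DecidableEq β] [DecidableEq γ] (n : ℕ) :
    #{x : β × γ | n • x = 0} = #{x : β | n • x = 0} * #{y : γ | n • y = 0} := by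
  rw [← card_product, ← filter_product, univ_product_univ]
  simp only [Prod.ext_iff, Prod.smul_fst, Prod.smul_snd, Prod.fst_zero, Prod.snd_zero]

theorem card_pow_nsmul_eq_zero_zmod_prod (p a b c k : ℕ) [NeZero p] :
    #{x : ZMod (p ^ a) × ZMod (p ^ b) × ZMod (p ^ c) | p ^ k • x = 0} =
      p ^ (min k a + min k b + min k c) := by
  rw [Prod.card_nsmul_eq_zero, Prod.card_nsmul_eq_zero, ZMod.card_pow_nsmul_eq_zero,
    ZMod.card_pow_nsmul_eq_zero, ZMod.card_pow_nsmul_eq_zero, pow_add, pow_add, mul_assoc]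

theorem sum_range_eq_of_two_pow_recurrence {a b c : ℕ} (hcb : c ≤ b) (hba : b ≤ a)
    {T : ℕ → ℕ} (h0 : T 0 = 1)
    (hT : ∀ k, T (k + 1) * 2 ^ k + 2 ^ (min k a + min k b + min k c) =
      2 ^ (min (k + 1) a + min (k + 1) b + min (k + 1) c)) :
    ∑ k ∈ range (a + 1), T k =
      7 * (4 ^ c - 1) / 3 + 3 * 2 ^ c * (2 ^ b - 2 ^ c) + (a - b) * 2 ^ (b + c) + 1 := by
  have hlow : ∀ k < c, T (k + 1) = 7 * 4 ^ k := by
    intro k hk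
    have h := hT k
    rw [show min k a + min k b + min k c = 3 * k by omega,
      show min (k + 1) a + min (k + 1) b + min (k + 1) c = 3 * k + 3 by omega] at h
    apply Nat.eq_of_mul_eq_mul_right (pow_pos two_pos k)
    rw [show (4 : ℕ) = 2 ^ 2 by rfl, ← pow_mul]
    ring_nf at h ⊢
    omega
  have hmid : ∀ k, c ≤ k → k < b → T (k + 1) = 3 * 2 ^ c * 2 ^ k := by
    intro k hck hkb
    have h := hT k
    rw [show min k a + min k b + min k c = 2 * k + c by omega,
      show min (k + 1) a + min (k + 1) b + min (k + 1) c = 2 * k + c + 2 by omega] at h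
    apply Nat.eq_of_mul_eq_mul_right (pow_pos two_pos k)
    ring_nf at h ⊢
    omega
  have hhigh : ∀ k, b ≤ k → k < a → T (k + 1) = 2 ^ (b + c) := by
    intro k hbk hka
    have h := hT k
    rw [show min k a + min k b + min k c = k + b + c by omega,
      show min (k + 1) a + min (k + 1) b + min (k + 1) c = k + b + c + 1 by omega] at h
    apply Nat.eq_of_mul_eq_mul_right (pow_pos two_pos k)
    ring_nf at h ⊢
    omega
  have hgeom₄ := geom_sum_mul_add 3 c
  have hgeom₂ (n : ℕ) := geom_sum_mul_add 1 n
  norm_num at hgeom₄ hgeom₂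
  have slow : ∑ k ∈ range c, T (k + 1) = 7 * (4 ^ c - 1) / 3 := by
    rw [sum_congr rfl fun k hk => hlow k (mem_range.1 hk), ← mul_sum]
    omega
  have smid : ∑ k ∈ Ico c b, T (k + 1) = 3 * 2 ^ c * (2 ^ b - 2 ^ c) := by
    rw [sum_congr rfl fun k hk => hmid k (mem_Ico.1 hk).1 (mem_Ico.1 hk).2, ← mul_sum]
    have hsplit := sum_range_add_sum_Ico (fun k => 2 ^ k) hcb
    have hb := hgeom₂ b
    have hc := hgeom₂ c
    congr 1
    omega
  have shigh : ∑ k ∈ Ico b a, T (k + 1) = (a - b) * 2 ^ (b + c) := by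
    rw [sum_congr rfl fun k hk => hhigh k (mem_Ico.1 hk).1 (mem_Ico.1 hk).2, sum_const,
      Nat.card_Ico, smul_eq_mul]
  rw [sum_range_succ', h0, ← sum_range_add_sum_Ico _ hba, ← sum_range_add_sum_Ico _ hcb, slow,
    smid, shigh]

theorem total_cyclic_subgroups_three_factors_general (a b c : ℕ) (hcb : c ≤ b)
    (hba : b ≤ a) :
    Set.ncard {H : AddSubgroup (ZMod (2 ^ a) × ZMod (2 ^ b) × ZMod (2 ^ c)) |
      ∃ x, H = AddSubgroup.zmultiples x} =
      7 * (4 ^ c - 1) / 3 + 3 * 2 ^ c * (2 ^ b - 2 ^ c) + (a - b) * 2 ^ (b + c) + 1 := by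
  classical
  have hset : {H : AddSubgroup (ZMod (2 ^ a) × ZMod (2 ^ b) × ZMod (2 ^ c)) |
      ∃ x, H = zmultiples x} =
        (cyclicAddSubgroups (ZMod (2 ^ a) × ZMod (2 ^ b) × ZMod (2 ^ c)) : Set _) := by
    ext H
    simp [eq_comm]
  have hexp (x : ZMod (2 ^ a) × ZMod (2 ^ b) × ZMod (2 ^ c)) : 2 ^ a • x = 0 :=
    Prod.ext (ZMod.nsmul_eq_zero_of_dvd dvd_rfl _) <| Prod.ext
      (ZMod.nsmul_eq_zero_of_dvd (pow_dvd_pow 2 hba) _)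
      (ZMod.nsmul_eq_zero_of_dvd (pow_dvd_pow 2 (hcb.trans hba)) _)
  rw [hset, Set.ncard_coe_finset, card_cyclicAddSubgroups_eq_sum hexp]
  refine sum_range_eq_of_two_pow_recurrence hcb hba ?_ fun k => ?_
  · simpa [AddMonoid.addOrderOf_eq_one_iff, filter_eq'] using
      card_filter_cyclicAddSubgroups_mul_totient
        (α := ZMod (2 ^ a) × ZMod (2 ^ b) × ZMod (2 ^ c)) 1
  · rw [← card_pow_nsmul_eq_zero_zmod_prod, ← card_pow_nsmul_eq_zero_zmod_prod,
      ← card_addOrderOf_eq_prime_pow_succ_add, ← card_filter_cyclicAddSubgroups_mul_totient,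
      Nat.totient_prime_pow_succ Nat.prime_two]
    simp

/-- The total number of cyclic subgroups of `C_{2^a} × C_{2^b} × C_{2^c}` with
`a ≥ b ≥ c ≥ 1` is `(7/3)(4^c - 1) + 3·2^c(2^b - 2^c) + (a - b)·2^(b+c) + 1`. -/
theorem total_cyclic_subgroups_three_factors (a b c : ℕ) (hc : 1 ≤ c) (hcb : c ≤ b)
    (hba : b ≤ a) :
    Set.ncard {H : AddSubgroup (ZMod (2 ^ a) × ZMod (2 ^ b) × ZMod (2 ^ c)) |
      ∃ x, H = AddSubgroup.zmultiples x} =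
      7 * (4 ^ c - 1) / 3 + 3 * 2 ^ c * (2 ^ b - 2 ^ c) + (a - b) * 2 ^ (b + c) + 1 :=
  total_cyclic_subgroups_three_factors_general a b c hcb hba
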